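/- Convergence of the bilateral very-well-poised 6ψ6 series: let q ∈ ℂ with 0 < |q| < 1 and a, b, c, d, e nonzero with |qa²/(bcde)| < 1, all Pochhammer denominators nonzero. Then the bilateral series ∑_{k∈ℤ} (q√a, -q√a, b, c, d, e; q)_k / (√a, -√a, aq/b, aq/c, aq/d, aq/e; q)_k · (qa²/(bcde))^k converges absolutely (i.e., the function k ↦ term(k) is summable over ℤ). -/

import Mathlib

open Filter Complex Topology

/-- Infinite q-Pochhammer symbol `(a;q)_∞ = ∏_{j≥0} (1 - a q^j)`. -/
noncomputable def qPochInf (a q : ℂ) : ℂ := ∏' j : ℕ, (1 - a * q ^ j)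

/-- q-Pochhammer symbol with integer index: `(a;q)_k = (a;q)_∞ / (a q^k;q)_∞`. -/
noncomputable def qPochInt (a q : ℂ) (k : ℤ) : ℂ := qPochInf a q / qPochInf (a * q ^ k) q

/-- Finite q-Pochhammer symbol `(a;q)_n = ∏_{j=0}^{n-1} (1 - a q^j)`. -/
noncomputable def qPoch (a q : ℂ) (n : ℕ) : ℂ := ∏ j ∈ Finset.range n, (1 - a * q ^ j)

/-- Product of integer-index q-Pochhammer symbols `(a₁,…,a_m;q)_k`. -/
noncomputable def qPochIntL (as : List ℂ) (q : ℂ) (k : ℤ) : ℂ :=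
  (as.map fun a => qPochInt a q k).prod

/-- Product of infinite q-Pochhammer symbols `(a₁,…,a_m;q)_∞`. -/
noncomputable def qPochInfL (as : List ℂ) (q : ℂ) : ℂ :=
  (as.map fun a => qPochInf a q).prod

/-- Product of finite q-Pochhammer symbols `(a₁,…,a_m;q)_n`. -/
noncomputable def qPochL (as : List ℂ) (q : ℂ) (n : ℕ) : ℂ :=
  (as.map fun a => qPoch a q n).prod

/-- Basic hypergeometric series `ₛφₛ₋₁` with top parameters `tops`,
bottom parameters `bots` (besides `q`), base `q` and argument `z`. -/
noncomputable def phiSeries (tops bots : List ℂ) (q z : ℂ) : ℂ :=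
  ∑' k : ℕ, qPochL tops q k / qPochL (q :: bots) q k * z ^ k

section Aux

variable {q : ℂ}

private lemma summable_log_aux (hq1 : ‖q‖ < 1) (x : ℂ) :
    Summable fun j : ℕ => Complex.log (1 - x * q ^ j) := by
  have hq1' : ‖q‖ < 1 := by exact hq1
  have h0 : Tendsto (fun j : ℕ => x * q ^ j) atTop (𝓝 0) := by
    simpa using (tendsto_pow_atTop_nhds_zero_of_norm_lt_one hq1').const_mul x
  have hev : ∀ᶠ j in atTop, ‖x * q ^ j‖ ≤ 1 / 2 := by
    have := h0.norm
    rw [norm_zero] at this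
    exact this.eventually_le_const (by norm_num)
  refine Summable.of_norm_bounded_eventually_nat (g := fun j => 3 / 2 * (‖x‖ * ‖q‖ ^ j)) ?_ ?_
  · exact ((summable_geometric_of_lt_one (norm_nonneg q) hq1').mul_left _).mul_left _
  · filter_upwards [hev] with j hj
    have h1 : ‖Complex.log (1 + -(x * q ^ j))‖ ≤ 3 / 2 * ‖-(x * q ^ j)‖ :=
      Complex.norm_log_one_add_half_le_self (by simpa using hj)
    rw [norm_neg] at h1
    simpa [sub_eq_add_neg, norm_mul, norm_pow] using h1

private lemma qPochInf_eq_exp (hq1 : ‖q‖ < 1) {x : ℂ}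
    (hx : ∀ j : ℕ, 1 - x * q ^ j ≠ 0) :
    qPochInf x q = Complex.exp (∑' j : ℕ, Complex.log (1 - x * q ^ j)) := by
  have hp : HasProd (fun j : ℕ => 1 - x * q ^ j)
      (Complex.exp (∑' j : ℕ, Complex.log (1 - x * q ^ j))) :=
    ((summable_log_aux hq1 x).hasSum.cexp).congr_fun fun j => (Complex.exp_log (hx j)).symm
  exact hp.tprod_eq.symm ▸ rfl

private lemma qPochInf_ne_zero (hq1 : ‖q‖ < 1) {x : ℂ}
    (hx : ∀ j : ℕ, 1 - x * q ^ j ≠ 0) : qPochInf x q ≠ 0 := by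
  rw [qPochInf_eq_exp hq1 hx]; exact Complex.exp_ne_zero _

private lemma qPochInf_succ (hq1 : ‖q‖ < 1) {x : ℂ}
    (hx : ∀ j : ℕ, 1 - x * q ^ j ≠ 0) :
    qPochInf x q = (1 - x) * qPochInf (x * q) q := by
  have hx' : ∀ j : ℕ, 1 - x * q * q ^ j ≠ 0 := fun j => by
    have := hx (j + 1); rwa [show x * q ^ (j + 1) = x * q * q ^ j by ring] at this
  rw [qPochInf_eq_exp hq1 hx, qPochInf_eq_exp hq1 hx',
    Summable.tsum_eq_zero_add (summable_log_aux hq1 x), Complex.exp_add]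
  congr 1
  · simpa using Complex.exp_log (by simpa using hx 0)
  · congr 1
    exact tsum_congr fun j => by rw [show x * q ^ (j + 1) = x * q * q ^ j by ring]

private lemma summable_aux (q z t1 t2 t3 t4 t5 t6 u1 u2 u3 u4 u5 u6 : ℂ)
    (hq0 : q ≠ 0) (hq1 : ‖q‖ < 1) (hz0 : z ≠ 0) (hz1 : ‖z‖ < 1)
    (hT : ∀ t ∈ [t1, t2, t3, t4, t5, t6], ∀ m : ℤ, t ≠ q ^ m)
    (hU : ∀ t ∈ [u1, u2, u3, u4, u5, u6], ∀ m : ℤ, t ≠ q ^ m)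
    (hlim : z * ((0 - t1) * (0 - t2) * (0 - t3) * (0 - t4) * (0 - t5) * (0 - t6)) /
        ((0 - u1) * (0 - u2) * (0 - u3) * (0 - u4) * (0 - u5) * (0 - u6)) = z⁻¹) :
    Summable fun k : ℤ =>
      qPochIntL [t1, t2, t3, t4, t5, t6] q k / qPochIntL [u1, u2, u3, u4, u5, u6] q k * z ^ k := by
  -- generic facts
  have hfac : ∀ t : ℂ, (∀ m : ℤ, t ≠ q ^ m) → ∀ m : ℤ, (1 : ℂ) - t * q ^ m ≠ 0 := by
    intro t ht m h
    apply ht (-m)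
    have h1 : q ^ m * t = 1 := by linear_combination -h
    rw [zpow_neg]
    exact eq_inv_of_mul_eq_one_right h1
  have hfacn : ∀ t : ℂ, (∀ m : ℤ, t ≠ q ^ m) → ∀ k : ℤ, ∀ j : ℕ,
      (1 : ℂ) - t * q ^ k * q ^ j ≠ 0 := by
    intro t ht k j
    have := hfac t ht (k + j)
    rw [zpow_add₀ hq0, zpow_natCast] at this
    simpa [mul_assoc] using this
  have hPne : ∀ t : ℂ, (∀ m : ℤ, t ≠ q ^ m) → ∀ k : ℤ, qPochInt t q k ≠ 0 := by
    intro t ht k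
    unfold qPochInt
    apply div_ne_zero
    · apply qPochInf_ne_zero hq1
      intro j
      have := hfac t ht (j : ℤ)
      rwa [zpow_natCast] at this
    · exact qPochInf_ne_zero hq1 (hfacn t ht k)
  have hstep : ∀ t : ℂ, (∀ m : ℤ, t ≠ q ^ m) → ∀ k : ℤ,
      qPochInt t q (k + 1) = qPochInt t q k * (1 - t * q ^ k) := by
    intro t ht k
    have h2 : t * q ^ k * q = t * q ^ (k + 1) := by
      rw [zpow_add₀ hq0, zpow_one]; ring
    have h1 : qPochInf (t * q ^ k) q = (1 - t * q ^ k) * qPochInf (t * q ^ (k + 1)) q := by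
      rw [← h2]; exact qPochInf_succ hq1 (hfacn t ht k)
    have hA : qPochInf (t * q ^ (k + 1)) q ≠ 0 := qPochInf_ne_zero hq1 (hfacn t ht (k + 1))
    have hf := hfac t ht k
    unfold qPochInt
    rw [h1]
    field_simp
  -- per-parameter hypotheses
  have ht1 : ∀ m : ℤ, t1 ≠ q ^ m := hT _ (by simp)
  have ht2 : ∀ m : ℤ, t2 ≠ q ^ m := hT _ (by simp)
  have ht3 : ∀ m : ℤ, t3 ≠ q ^ m := hT _ (by simp)
  have ht4 : ∀ m : ℤ, t4 ≠ q ^ m := hT _ (by simp)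
  have ht5 : ∀ m : ℤ, t5 ≠ q ^ m := hT _ (by simp)
  have ht6 : ∀ m : ℤ, t6 ≠ q ^ m := hT _ (by simp)
  have hu1 : ∀ m : ℤ, u1 ≠ q ^ m := hU _ (by simp)
  have hu2 : ∀ m : ℤ, u2 ≠ q ^ m := hU _ (by simp)
  have hu3 : ∀ m : ℤ, u3 ≠ q ^ m := hU _ (by simp)
  have hu4 : ∀ m : ℤ, u4 ≠ q ^ m := hU _ (by simp)
  have hu5 : ∀ m : ℤ, u5 ≠ q ^ m := hU _ (by simp)
  have hu6 : ∀ m : ℤ, u6 ≠ q ^ m := hU _ (by simp)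
  set F : ℤ → ℂ := fun k =>
      qPochIntL [t1, t2, t3, t4, t5, t6] q k / qPochIntL [u1, u2, u3, u4, u5, u6] q k * z ^ k
    with hF
  have hprodT : ∀ k : ℤ, qPochIntL [t1, t2, t3, t4, t5, t6] q k =
      qPochInt t1 q k * qPochInt t2 q k * qPochInt t3 q k * qPochInt t4 q k *
        qPochInt t5 q k * qPochInt t6 q k := by
    intro k; simp [qPochIntL]; ring
  have hprodU : ∀ k : ℤ, qPochIntL [u1, u2, u3, u4, u5, u6] q k =
      qPochInt u1 q k * qPochInt u2 q k * qPochInt u3 q k * qPochInt u4 q k *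
        qPochInt u5 q k * qPochInt u6 q k := by
    intro k; simp [qPochIntL]; ring
  have hTne : ∀ k : ℤ, qPochIntL [t1, t2, t3, t4, t5, t6] q k ≠ 0 := by
    intro k
    rw [hprodT]
    exact mul_ne_zero (mul_ne_zero (mul_ne_zero (mul_ne_zero (mul_ne_zero
      (hPne _ ht1 k) (hPne _ ht2 k)) (hPne _ ht3 k)) (hPne _ ht4 k)) (hPne _ ht5 k)) (hPne _ ht6 k)
  have hUne : ∀ k : ℤ, qPochIntL [u1, u2, u3, u4, u5, u6] q k ≠ 0 := by
    intro k
    rw [hprodU]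
    exact mul_ne_zero (mul_ne_zero (mul_ne_zero (mul_ne_zero (mul_ne_zero
      (hPne _ hu1 k) (hPne _ hu2 k)) (hPne _ hu3 k)) (hPne _ hu4 k)) (hPne _ hu5 k)) (hPne _ hu6 k)
  have hFne : ∀ k : ℤ, F k ≠ 0 := by
    intro k
    exact mul_ne_zero (div_ne_zero (hTne k) (hUne k)) (zpow_ne_zero _ hz0)
  set TP : ℤ → ℂ := fun k => (1 - t1 * q ^ k) * (1 - t2 * q ^ k) * (1 - t3 * q ^ k) *
      (1 - t4 * q ^ k) * (1 - t5 * q ^ k) * (1 - t6 * q ^ k) with hTP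
  set BP : ℤ → ℂ := fun k => (1 - u1 * q ^ k) * (1 - u2 * q ^ k) * (1 - u3 * q ^ k) *
      (1 - u4 * q ^ k) * (1 - u5 * q ^ k) * (1 - u6 * q ^ k) with hBP
  have hBPne : ∀ k : ℤ, BP k ≠ 0 := by
    intro k
    simp only [hBP]
    exact mul_ne_zero (mul_ne_zero (mul_ne_zero (mul_ne_zero (mul_ne_zero
      (hfac _ hu1 k) (hfac _ hu2 k)) (hfac _ hu3 k)) (hfac _ hu4 k)) (hfac _ hu5 k)) (hfac _ hu6 k)
  have hNstep : ∀ k : ℤ, qPochIntL [t1, t2, t3, t4, t5, t6] q (k + 1) =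
      qPochIntL [t1, t2, t3, t4, t5, t6] q k * TP k := by
    intro k
    rw [hprodT, hprodT, hstep _ ht1 k, hstep _ ht2 k, hstep _ ht3 k, hstep _ ht4 k,
      hstep _ ht5 k, hstep _ ht6 k, hTP]
    ring
  have hDstep : ∀ k : ℤ, qPochIntL [u1, u2, u3, u4, u5, u6] q (k + 1) =
      qPochIntL [u1, u2, u3, u4, u5, u6] q k * BP k := by
    intro k
    rw [hprodU, hprodU, hstep _ hu1 k, hstep _ hu2 k, hstep _ hu3 k, hstep _ hu4 k,
      hstep _ hu5 k, hstep _ hu6 k, hBP]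
    ring
  have hrec : ∀ k : ℤ, F (k + 1) = F k * (z * TP k / BP k) := by
    intro k
    simp only [hF]
    rw [hNstep k, hDstep k, zpow_add_one₀ hz0]
    have h1 := hUne k
    have h2 := hBPne k
    field_simp
  have hratio : ∀ k : ℤ, F (k + 1) / F k = z * TP k / BP k := by
    intro k
    rw [hrec k, mul_comm (F k), mul_div_assoc, div_self (hFne k), mul_one]
  -- positive side
  have h0 : Tendsto (fun n : ℕ => (q : ℂ) ^ n) atTop (𝓝 0) :=
    tendsto_pow_atTop_nhds_zero_of_norm_lt_one (by exact hq1)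
  have hfl : ∀ t : ℂ, Tendsto (fun n : ℕ => 1 - t * (q : ℂ) ^ n) atTop (𝓝 1) := by
    intro t
    have := (h0.const_mul t).const_sub 1
    simpa using this
  have hTPl : Tendsto (fun n : ℕ => TP n) atTop (𝓝 1) := by
    simp only [hTP, zpow_natCast]
    simpa using
      (((((hfl t1).mul (hfl t2)).mul (hfl t3)).mul (hfl t4)).mul (hfl t5)).mul (hfl t6)
  have hBPl : Tendsto (fun n : ℕ => BP n) atTop (𝓝 1) := by
    simp only [hBP, zpow_natCast]
    simpa using
      (((((hfl u1).mul (hfl u2)).mul (hfl u3)).mul (hfl u4)).mul (hfl u5)).mul (hfl u6)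
  have hrl : Tendsto (fun n : ℕ => z * TP n / BP n) atTop (𝓝 z) := by
    have := (tendsto_const_nhds (x := z) (f := atTop)).mul hTPl |>.div hBPl one_ne_zero
    simpa [Pi.div_def] using this
  have hpos : Summable fun n : ℕ => F n := by
    apply summable_of_ratio_test_tendsto_lt_one hz1 (Eventually.of_forall fun n => hFne _)
    have key : ∀ n : ℕ, ‖F ((n : ℤ) + 1)‖ / ‖F (n : ℤ)‖ = ‖z * TP n / BP n‖ := by
      intro n
      rw [← norm_div, hratio]
    refine (hrl.norm).congr fun n => ?_
    rw [← key n]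
    norm_cast
  -- negative side
  have hneg : Summable fun n : ℕ => F (-n) := by
    have hgrec : ∀ n : ℕ, F (-(n : ℤ)) =
        F (-((n : ℤ) + 1)) * (z * TP (-((n : ℤ) + 1)) / BP (-((n : ℤ) + 1))) := by
      intro n
      have := hrec (-((n : ℤ) + 1))
      rwa [show -((n : ℤ) + 1) + 1 = -(n : ℤ) by ring] at this
    have hkey : ∀ n : ℕ, F (-((n : ℤ) + 1)) / F (-(n : ℤ)) =
        (z * TP (-((n : ℤ) + 1)) / BP (-((n : ℤ) + 1)))⁻¹ := by
      intro n
      rw [hgrec n, div_mul_cancel_left₀ (hFne _)]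
    have hUprod0 : (0 - u1) * (0 - u2) * (0 - u3) * (0 - u4) * (0 - u5) * (0 - u6) ≠ 0 := by
      intro h
      rw [h, div_zero] at hlim
      exact inv_ne_zero hz0 hlim.symm
    have hrewrite : ∀ n : ℕ, z * TP (-((n : ℤ) + 1)) / BP (-((n : ℤ) + 1)) =
        z * ((q ^ (n + 1) - t1) * (q ^ (n + 1) - t2) * (q ^ (n + 1) - t3) * (q ^ (n + 1) - t4) *
            (q ^ (n + 1) - t5) * (q ^ (n + 1) - t6)) /
          ((q ^ (n + 1) - u1) * (q ^ (n + 1) - u2) * (q ^ (n + 1) - u3) * (q ^ (n + 1) - u4) *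
            (q ^ (n + 1) - u5) * (q ^ (n + 1) - u6)) := by
      intro n
      have hu : (q : ℂ) ^ (n + 1) ≠ 0 := pow_ne_zero _ hq0
      have hzp : (q : ℂ) ^ (-((n : ℤ) + 1)) = ((q : ℂ) ^ (n + 1 : ℕ))⁻¹ := by
        rw [show -((n : ℤ) + 1) = -(((n + 1 : ℕ) : ℤ)) by push_cast; ring, zpow_neg, zpow_natCast]
      have hfactor : ∀ s : ℂ, 1 - s * ((q : ℂ) ^ (n + 1))⁻¹ =
          ((q : ℂ) ^ (n + 1) - s) * ((q : ℂ) ^ (n + 1))⁻¹ := by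
        intro s
        field_simp
      simp only [hTP, hBP, hzp]
      rw [hfactor t1, hfactor t2, hfactor t3, hfactor t4, hfactor t5, hfactor t6,
        hfactor u1, hfactor u2, hfactor u3, hfactor u4, hfactor u5, hfactor u6]
      rw [show z * ((q ^ (n + 1) - t1) * ((q ^ (n + 1)) : ℂ)⁻¹ *
            ((q ^ (n + 1) - t2) * ((q ^ (n + 1)) : ℂ)⁻¹) *
            ((q ^ (n + 1) - t3) * ((q ^ (n + 1)) : ℂ)⁻¹) *
            ((q ^ (n + 1) - t4) * ((q ^ (n + 1)) : ℂ)⁻¹) *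
            ((q ^ (n + 1) - t5) * ((q ^ (n + 1)) : ℂ)⁻¹) *
            ((q ^ (n + 1) - t6) * ((q ^ (n + 1)) : ℂ)⁻¹)) =
          z * ((q ^ (n + 1) - t1) * (q ^ (n + 1) - t2) * (q ^ (n + 1) - t3) * (q ^ (n + 1) - t4) *
            (q ^ (n + 1) - t5) * (q ^ (n + 1) - t6)) * (((q ^ (n + 1)) : ℂ)⁻¹) ^ 6 from by ring,
        show ((q ^ (n + 1) - u1) * ((q ^ (n + 1)) : ℂ)⁻¹ *
            ((q ^ (n + 1) - u2) * ((q ^ (n + 1)) : ℂ)⁻¹) *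
            ((q ^ (n + 1) - u3) * ((q ^ (n + 1)) : ℂ)⁻¹) *
            ((q ^ (n + 1) - u4) * ((q ^ (n + 1)) : ℂ)⁻¹) *
            ((q ^ (n + 1) - u5) * ((q ^ (n + 1)) : ℂ)⁻¹) *
            ((q ^ (n + 1) - u6) * ((q ^ (n + 1)) : ℂ)⁻¹)) =
          ((q ^ (n + 1) - u1) * (q ^ (n + 1) - u2) * (q ^ (n + 1) - u3) * (q ^ (n + 1) - u4) *
            (q ^ (n + 1) - u5) * (q ^ (n + 1) - u6)) * (((q ^ (n + 1)) : ℂ)⁻¹) ^ 6 from by ring,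
        mul_div_mul_right _ _ (pow_ne_zero 6 (inv_ne_zero hu))]
    have h0' : Tendsto (fun n : ℕ => (q : ℂ) ^ (n + 1)) atTop (𝓝 0) := by
      have := h0.const_mul q
      rw [mul_zero] at this
      refine this.congr fun n => ?_
      rw [pow_succ]
      ring
    have hsub : ∀ s : ℂ, Tendsto (fun n : ℕ => (q : ℂ) ^ (n + 1) - s) atTop (𝓝 (0 - s)) :=
      fun s => h0'.sub_const s
    have hsl : Tendsto (fun n : ℕ =>
        z * ((q ^ (n + 1) - t1) * (q ^ (n + 1) - t2) * (q ^ (n + 1) - t3) * (q ^ (n + 1) - t4) *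
            (q ^ (n + 1) - t5) * (q ^ (n + 1) - t6)) /
          ((q ^ (n + 1) - u1) * (q ^ (n + 1) - u2) * (q ^ (n + 1) - u3) * (q ^ (n + 1) - u4) *
            (q ^ (n + 1) - u5) * (q ^ (n + 1) - u6))) atTop (𝓝 z⁻¹) := by
      rw [← hlim]
      exact (tendsto_const_nhds.mul
        ((((((hsub t1).mul (hsub t2)).mul (hsub t3)).mul (hsub t4)).mul (hsub t5)).mul (hsub t6))).div
        ((((((hsub u1).mul (hsub u2)).mul (hsub u3)).mul (hsub u4)).mul (hsub u5)).mul (hsub u6))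
        hUprod0
    have hsl2 : Tendsto (fun n : ℕ =>
        (z * TP (-((n : ℤ) + 1)) / BP (-((n : ℤ) + 1)))⁻¹) atTop (𝓝 z) := by
      have := (hsl.congr fun n => (hrewrite n).symm).inv₀ (inv_ne_zero hz0)
      rwa [inv_inv] at this
    apply summable_of_ratio_test_tendsto_lt_one hz1 (Eventually.of_forall fun n => hFne _)
    refine (hsl2.norm).congr fun n => ?_
    rw [← norm_div, ← hkey n]
    norm_cast
  exact Summable.of_nat_of_neg hpos hneg

end Aux

theorem summable_6psi6 (q a b c d e sa : ℂ)
    (hq0 : 0 < ‖q‖) (hq1 : ‖q‖ < 1)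
    (ha : a ≠ 0) (hb : b ≠ 0) (hc : c ≠ 0) (hd : d ≠ 0) (he : e ≠ 0)
    (hsa : sa ^ 2 = a)
    (hz : ‖q * a ^ 2 / (b * c * d * e)‖ < 1)
    (hgen : ∀ t ∈ [q * sa, -(q * sa), b, c, d, e,
        sa, -sa, a * q / b, a * q / c, a * q / d, a * q / e],
      ∀ m : ℤ, t ≠ q ^ m) :
    Summable fun k : ℤ =>
      qPochIntL [q * sa, -(q * sa), b, c, d, e] q k /
        qPochIntL [sa, -sa, a * q / b, a * q / c, a * q / d, a * q / e] q k *
        (q * a ^ 2 / (b * c * d * e)) ^ k := by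
  subst hsa
  have hqne : q ≠ 0 := by
    intro h; rw [h] at hq0; simp at hq0
  have hsa0 : sa ≠ 0 := by
    intro h; exact ha (by rw [h]; ring)
  have hbcde : b * c * d * e ≠ 0 := mul_ne_zero (mul_ne_zero (mul_ne_zero hb hc) hd) he
  have hz0 : q * (sa ^ 2) ^ 2 / (b * c * d * e) ≠ 0 :=
    div_ne_zero (mul_ne_zero hqne (pow_ne_zero _ (pow_ne_zero _ hsa0))) hbcde
  have hz1 : ‖q * (sa ^ 2) ^ 2 / (b * c * d * e)‖ < 1 := by
    exact hz
  have hTm : ∀ t ∈ [q * sa, -(q * sa), b, c, d, e], ∀ m : ℤ, t ≠ q ^ m := by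
    intro t ht
    apply hgen
    simp only [List.mem_cons, List.not_mem_nil, or_false] at ht ⊢
    tauto
  have hUm : ∀ t ∈ [sa, -sa, sa ^ 2 * q / b, sa ^ 2 * q / c, sa ^ 2 * q / d, sa ^ 2 * q / e],
      ∀ m : ℤ, t ≠ q ^ m := by
    intro t ht
    apply hgen
    simp only [List.mem_cons, List.not_mem_nil, or_false] at ht ⊢
    tauto
  have hlim : (q * (sa ^ 2) ^ 2 / (b * c * d * e)) *
        ((0 - q * sa) * (0 - -(q * sa)) * (0 - b) * (0 - c) * (0 - d) * (0 - e)) /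
        ((0 - sa) * (0 - -sa) * (0 - sa ^ 2 * q / b) * (0 - sa ^ 2 * q / c) *
          (0 - sa ^ 2 * q / d) * (0 - sa ^ 2 * q / e)) =
      (q * (sa ^ 2) ^ 2 / (b * c * d * e))⁻¹ := by
    field_simp
    rw [div_eq_iff (by simp [mul_ne_zero_iff, pow_ne_zero_iff, hb, hc, hd, he, hsa0, hqne])]
    ring
  exact summable_aux q _ _ _ _ _ _ _ _ _ _ _ _ _ hqne hq1 hz0 hz1 hTm hUm hlim
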